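/- arXiv:1909.04519 — 2 statements merged into one kernel-verified Lean document; each statement's English description precedes it below -/
import Mathlib

section
/- Every unit quaternion q (|q| = 1) can be written as q = exp(i φ)·exp(k ψ)·exp(j θ) for some real angles φ ∈ [-π, π), ψ ∈ [-π/2, π/2), θ ∈ [-π/4, π/4]. -/
/-!
The products `e^{iφ} e^{kψ} = (cos φ + i sin φ)(cos ψ + k sin ψ)` are exactly the unit
quaternions `p` with `p.re * p.imJ + p.imI * p.imK = 0`, i.e. those for which `p k p̄` has no
`i`-component. Right multiplication by `e^{-jθ}` turns this quadratic form of `q` into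
`A cos 2θ - B sin 2θ` for some `A`, `B` depending on `q`, so `2θ = arctan (A / B)` (or `π / 2`
when `B = 0`) makes it vanish for `p = q e^{-jθ}`. Then `φ` is the polar angle of
`(p.re, p.imI)` and `ψ` an arcsine.
-/

open Quaternion

/-- The imaginary unit `i` of the quaternions. -/
def qI : ℍ[ℝ] := ⟨0, 1, 0, 0⟩

/-- The imaginary unit `j` of the quaternions. -/
def qJ : ℍ[ℝ] := ⟨0, 0, 1, 0⟩

/-- The imaginary unit `k` of the quaternions. -/
def qK : ℍ[ℝ] := ⟨0, 0, 0, 1⟩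

open Real Set

@[simp] theorem qI_coords : qI.re = 0 ∧ qI.imI = 1 ∧ qI.imJ = 0 ∧ qI.imK = 0 := ⟨rfl, rfl, rfl, rfl⟩

@[simp] theorem qJ_coords : qJ.re = 0 ∧ qJ.imI = 0 ∧ qJ.imJ = 1 ∧ qJ.imK = 0 := ⟨rfl, rfl, rfl, rfl⟩

@[simp] theorem qK_coords : qK.re = 0 ∧ qK.imI = 0 ∧ qK.imJ = 0 ∧ qK.imK = 1 := ⟨rfl, rfl, rfl, rfl⟩

theorem exists_mem_Ico_cos_eq_sin_eq {c s : ℝ} (h : c ^ 2 + s ^ 2 = 1) :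
    ∃ φ ∈ Ico (-π) π, cos φ = c ∧ sin φ = s := by
  obtain ⟨θ, hθ⟩ := (Complex.norm_eq_one_iff ⟨c, s⟩).1 <| by
    rw [Complex.norm_def, Complex.normSq_mk, ← sq, ← sq, h, sqrt_one]
  refine ⟨toIcoMod two_pi_pos (-π) θ, ?_, ?_, ?_⟩
  · simpa [two_mul, ← sub_eq_add_neg] using toIcoMod_mem_Ico two_pi_pos (-π) θ
  · rw [toIcoMod, zsmul_eq_mul, cos_sub_int_mul_two_pi, ← Complex.exp_ofReal_mul_I_re, hθ]
  · rw [toIcoMod, zsmul_eq_mul, sin_sub_int_mul_two_pi, ← Complex.exp_ofReal_mul_I_im, hθ]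

theorem exists_mem_Icc_mul_cos_eq_mul_sin (A B : ℝ) :
    ∃ α ∈ Icc (-(π / 2)) (π / 2), A * cos α = B * sin α := by
  rcases eq_or_ne B 0 with rfl | hB
  · exact ⟨π / 2, ⟨by linarith [pi_pos], le_rfl⟩, by simp⟩
  · refine ⟨arctan (A / B), ⟨(neg_pi_div_two_lt_arctan _).le, (arctan_lt_pi_div_two _).le⟩, ?_⟩
    rw [← tan_mul_cos (cos_arctan_pos (A / B)).ne', tan_arctan]
    field_simp

theorem exists_angles_of_mul_add_mul_eq_zero {a b c d : ℝ}
    (hsum : a ^ 2 + b ^ 2 + c ^ 2 + d ^ 2 = 1) (horth : a * c + b * d = 0) :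
    ∃ φ ∈ Ico (-π) π, ∃ ψ ∈ Ico (-(π / 2)) (π / 2),
      a = cos φ * cos ψ ∧ b = sin φ * cos ψ ∧ c = -(sin φ * sin ψ) ∧ d = cos φ * sin ψ := by
  rcases (add_nonneg (sq_nonneg a) (sq_nonneg b)).eq_or_lt with hab | hab
  · have ha : a = 0 := by nlinarith
    have hb : b = 0 := by nlinarith
    obtain ⟨φ, hφ, hcos, hsin⟩ := exists_mem_Ico_cos_eq_sin_eq (c := -d) (s := c) (by nlinarith)
    refine ⟨φ, hφ, -(π / 2), ⟨le_rfl, by linarith [pi_pos]⟩, ?_⟩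
    simp [hcos, hsin, ha, hb]
  · set r := √(a ^ 2 + b ^ 2)
    have hr : 0 < r := sqrt_pos.2 hab
    have hr2 : r ^ 2 = a ^ 2 + b ^ 2 := sq_sqrt hab.le
    obtain ⟨φ, hφ, hcos, hsin⟩ := exists_mem_Ico_cos_eq_sin_eq (c := a / r) (s := b / r) <| by
      field_simp; linarith
    set t := (a * d - b * c) / r with ht
    have ht2 : 1 - t ^ 2 = r ^ 2 := by
      have : t ^ 2 = c ^ 2 + d ^ 2 := by
        rw [div_pow, hr2, div_eq_iff hab.ne']
        linear_combination (-(a * c + b * d)) * horth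
      linarith
    obtain ⟨ht₁, ht₂⟩ := abs_lt.1 <| sq_lt_one_iff_abs_lt_one t |>.1 (by nlinarith)
    refine ⟨φ, hφ, arcsin t, ⟨neg_pi_div_two_le_arcsin t, arcsin_lt_pi_div_two.2 ht₂⟩, ?_⟩
    rw [cos_arcsin, sin_arcsin ht₁.le ht₂.le, ht2, sqrt_sq hr.le, hcos, hsin]
    refine ⟨by field_simp, by field_simp, ?_, ?_⟩ <;> rw [ht] <;> field_simp
    · linear_combination c * hr2 + a * horth
    · linear_combination d * hr2 + b * horth

theorem exp_smul_of_re_eq_zero_of_normSq_eq_one {u : ℍ[ℝ]} (hre : u.re = 0)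
    (hu : normSq u = 1) (t : ℝ) : NormedSpace.exp (t • u) = ↑(cos t) + sin t • u := by
  have hu' : ‖u‖ = 1 := by
    rw [normSq_eq_norm_mul_self, mul_self_eq_one_iff] at hu
    exact hu.resolve_right (by linarith [norm_nonneg u])
  rw [exp_of_re_eq_zero _ (by simp [hre]), norm_smul, hu', mul_one, Real.norm_eq_abs, cos_abs,
    smul_smul]
  rcases eq_or_ne t 0 with rfl | ht
  · simp
  rcases abs_choice t with h | h <;> rw [h]
  · rw [div_mul_cancel₀ _ ht]
  · rw [sin_neg, neg_div_neg_eq, div_mul_cancel₀ _ ht]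

theorem exp_smul_qI (t : ℝ) : NormedSpace.exp (t • qI) = ↑(cos t) + sin t • qI :=
  exp_smul_of_re_eq_zero_of_normSq_eq_one rfl (by simp [normSq_def']) t

theorem exp_smul_qJ (t : ℝ) : NormedSpace.exp (t • qJ) = ↑(cos t) + sin t • qJ :=
  exp_smul_of_re_eq_zero_of_normSq_eq_one rfl (by simp [normSq_def']) t

theorem exp_smul_qK (t : ℝ) : NormedSpace.exp (t • qK) = ↑(cos t) + sin t • qK :=
  exp_smul_of_re_eq_zero_of_normSq_eq_one rfl (by simp [normSq_def']) t

theorem normSq_exp_smul_qJ (t : ℝ) : normSq (NormedSpace.exp (t • qJ)) = 1 := by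
  simp [normSq_exp, re_smul]

theorem exp_smul_qI_mul_exp_smul_qK (φ ψ : ℝ) :
    NormedSpace.exp (φ • qI) * NormedSpace.exp (ψ • qK) =
      (⟨cos φ * cos ψ, sin φ * cos ψ, -(sin φ * sin ψ), cos φ * sin ψ⟩ : ℍ[ℝ]) := by
  rw [exp_smul_qI, exp_smul_qK]
  ext <;> simp [re_smul]

/-- Half the `i`-component of `p k p̄`. -/
def ikForm (p : ℍ[ℝ]) : ℝ := p.re * p.imJ + p.imI * p.imK

theorem exists_eq_exp_smul_qI_mul_exp_smul_qK_of_ikForm_eq_zero {p : ℍ[ℝ]} (hp : normSq p = 1)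
    (hform : ikForm p = 0) :
    ∃ φ ∈ Ico (-π) π, ∃ ψ ∈ Ico (-(π / 2)) (π / 2),
      p = NormedSpace.exp (φ • qI) * NormedSpace.exp (ψ • qK) := by
  rw [normSq_def'] at hp
  obtain ⟨φ, hφ, ψ, hψ, hre, himI, himJ, himK⟩ := exists_angles_of_mul_add_mul_eq_zero hp hform
  refine ⟨φ, hφ, ψ, hψ, ?_⟩
  rw [exp_smul_qI_mul_exp_smul_qK]
  ext <;> assumption

theorem exists_mem_Icc_ikForm_mul_star_exp_smul_qJ_eq_zero (q : ℍ[ℝ]) :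
    ∃ θ ∈ Icc (-(π / 4)) (π / 4), ikForm (q * star (NormedSpace.exp (θ • qJ))) = 0 := by
  obtain ⟨α, ⟨hα₁, hα₂⟩, hα⟩ := exists_mem_Icc_mul_cos_eq_mul_sin
    (2 * (q.re * q.imJ + q.imI * q.imK)) (q.re ^ 2 + q.imI ^ 2 - q.imJ ^ 2 - q.imK ^ 2)
  refine ⟨α / 2, ⟨by linarith, by linarith⟩, ?_⟩
  have hcos : cos α = cos (α / 2) ^ 2 - sin (α / 2) ^ 2 := by
    rw [← cos_two_mul', mul_div_cancel₀ α two_ne_zero]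
  have hsin : sin α = 2 * sin (α / 2) * cos (α / 2) := by
    rw [← sin_two_mul, mul_div_cancel₀ α two_ne_zero]
  simp only [ikForm, exp_smul_qJ, star_add, star_coe, Quaternion.star_smul, re_mul, imI_mul,
    imJ_mul, imK_mul, re_add, imI_add, imJ_add, imK_add, re_coe, imI_coe, imJ_coe, imK_coe, re_smul,
    imI_smul, imJ_smul, imK_smul, re_star, imI_star, imJ_star, imK_star, qJ_coords, smul_eq_mul]
  linear_combination hα / 2 - (q.re * q.imJ + q.imI * q.imK) * hcos
    + (q.re ^ 2 + q.imI ^ 2 - q.imJ ^ 2 - q.imK ^ 2) / 2 * hsin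

/-- Bülow's polar decomposition: every unit quaternion factors as
`exp(i φ) exp(k ψ) exp(j θ)` with angles in the indicated ranges. -/
theorem unit_quaternion_euler_decomposition (q : ℍ[ℝ]) (hq : ‖q‖ = 1) :
    ∃ φ ψ θ : ℝ,
      φ ∈ Set.Ico (-Real.pi) Real.pi ∧
      ψ ∈ Set.Ico (-(Real.pi / 2)) (Real.pi / 2) ∧
      θ ∈ Set.Icc (-(Real.pi / 4)) (Real.pi / 4) ∧
      q = NormedSpace.exp (φ • qI) * NormedSpace.exp (ψ • qK) *
            NormedSpace.exp (θ • qJ) := by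
  obtain ⟨θ, hθ, hform⟩ := exists_mem_Icc_ikForm_mul_star_exp_smul_qJ_eq_zero q
  have hp : normSq (q * star (NormedSpace.exp (θ • qJ))) = 1 := by
    rw [map_mul, normSq_star, normSq_exp_smul_qJ, mul_one, normSq_eq_norm_mul_self, hq, one_mul]
  obtain ⟨φ, hφ, ψ, hψ, hp_eq⟩ := exists_eq_exp_smul_qI_mul_exp_smul_qK_of_ikForm_eq_zero hp hform
  refine ⟨φ, ψ, θ, hφ, hψ, hθ, ?_⟩
  rw [← hp_eq, mul_assoc, star_mul_self, normSq_exp_smul_qJ, coe_one, mul_one]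
end

section
/- For any octonion o with imaginary part v = Im o ≠ 0, exp(o) = exp(Re o)·(cos |v| + (v/|v|)·sin |v|), where exp is defined by the power series ∑ oᵏ/k! (which converges since powers of a single octonion lie in a commutative associative subalgebra isomorphic to ℂ or ℝ). -/
noncomputable section

open Quaternion

/-- The octonions, constructed by Cayley–Dickson doubling of the quaternions:
pairs of quaternions with multiplication `(a,b)(c,d) = (ac - d* b, da + b c*)`. -/
def Octonion : Type := ℍ[ℝ] × ℍ[ℝ]

namespace Octonion

instance : AddCommGroup Octonion := inferInstanceAs (AddCommGroup (ℍ[ℝ] × ℍ[ℝ]))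
instance : Module ℝ Octonion := inferInstanceAs (Module ℝ (ℍ[ℝ] × ℍ[ℝ]))
instance : TopologicalSpace Octonion := inferInstanceAs (TopologicalSpace (ℍ[ℝ] × ℍ[ℝ]))

instance : One Octonion := ⟨((1 : ℍ[ℝ]), (0 : ℍ[ℝ]))⟩

/-- Cayley–Dickson multiplication. -/
instance : Mul Octonion :=
  ⟨fun o p => (o.1 * p.1 - star p.2 * o.2, p.2 * o.1 + o.2 * star p.1)⟩

/-- Octonion conjugation: `(a, b)* = (a*, -b)`; it negates all imaginary coordinates. -/
def conj (o : Octonion) : Octonion := (star o.1, -o.2)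

/-- The real part of an octonion (coefficient of `1`). -/
def re (o : Octonion) : ℝ := o.1.re

/-- The imaginary part of an octonion: `Im o = o - Re o`. -/
def im (o : Octonion) : Octonion := o - re o • (1 : Octonion)

/-- The Euclidean norm of an octonion. -/
noncomputable def norm (o : Octonion) : ℝ := Real.sqrt (‖o.1‖ ^ 2 + ‖o.2‖ ^ 2)

/-- Left-nested powers of an octonion. -/
def pow (o : Octonion) : ℕ → Octonion
  | 0 => 1
  | n + 1 => o * pow o n

/-- The octonion exponential, defined by the power series `∑ oᵏ/k!`. -/
noncomputable def exp (o : Octonion) : Octonion :=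
  ∑' k : ℕ, ((k.factorial : ℝ)⁻¹) • pow o k

/-- The imaginary unit `e₄`. -/
def e4 : Octonion := ((0 : ℍ[ℝ]), (1 : ℍ[ℝ]))

/-- The imaginary unit `e₅`. -/
def e5 : Octonion := ((0 : ℍ[ℝ]), (⟨0, 1, 0, 0⟩ : ℍ[ℝ]))

/-- The imaginary unit `e₆`. -/
def e6 : Octonion := ((0 : ℍ[ℝ]), (⟨0, 0, 1, 0⟩ : ℍ[ℝ]))

/-- The imaginary unit `e₇`. -/
def e7 : Octonion := ((0 : ℍ[ℝ]), (⟨0, 0, 0, 1⟩ : ℍ[ℝ]))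

end Octonion

/-!
On the real span of `1` and a unit imaginary octonion `u` we have `u * u = -1`, so
`x + y i ↦ x + y u` is a multiplicative real-linear map `ℂ → 𝕆`. Writing
`o = Re o + |v| u` with `v = Im o` and `u = v / |v|`, the powers of `o`, hence the partial sums
of its exponential series, are images of those of `z = Re o + |v| i`. By continuity
`exp o` is the image of `exp z = e^{Re o} (cos |v| + i sin |v|)`.
-/

namespace Octonion

instance : IsTopologicalAddGroup Octonion := inferInstanceAs (IsTopologicalAddGroup (ℍ[ℝ] × ℍ[ℝ]))
instance : ContinuousSMul ℝ Octonion := inferInstanceAs (ContinuousSMul ℝ (ℍ[ℝ] × ℍ[ℝ]))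
instance : T2Space Octonion := inferInstanceAs (T2Space (ℍ[ℝ] × ℍ[ℝ]))

@[ext]
lemma ext {o p : Octonion} (h₁ : o.1 = p.1) (h₂ : o.2 = p.2) : o = p := Prod.ext h₁ h₂

@[simp] lemma fst_mul (o p : Octonion) : (o * p).1 = o.1 * p.1 - star p.2 * o.2 := rfl
@[simp] lemma snd_mul (o p : Octonion) : (o * p).2 = p.2 * o.1 + o.2 * star p.1 := rfl
@[simp] lemma fst_one : (1 : Octonion).1 = 1 := rfl
@[simp] lemma snd_one : (1 : Octonion).2 = 0 := rfl
@[simp] lemma fst_add (o p : Octonion) : (o + p).1 = o.1 + p.1 := rfl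
@[simp] lemma snd_add (o p : Octonion) : (o + p).2 = o.2 + p.2 := rfl
@[simp] lemma fst_sub (o p : Octonion) : (o - p).1 = o.1 - p.1 := rfl
@[simp] lemma fst_smul (x : ℝ) (o : Octonion) : (x • o).1 = x • o.1 := rfl
@[simp] lemma snd_smul (x : ℝ) (o : Octonion) : (x • o).2 = x • o.2 := rfl

protected lemma mul_one (o : Octonion) : o * 1 = o := by
  ext <;> simp

protected lemma one_mul (o : Octonion) : 1 * o = o := by
  ext <;> simp

protected lemma smul_mul (x : ℝ) (o p : Octonion) : (x • o) * p = x • (o * p) := by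
  ext <;> simp [smul_sub, smul_add]

protected lemma mul_smul (x : ℝ) (o p : Octonion) : o * (x • p) = x • (o * p) := by
  ext <;> simp [smul_sub, smul_add]

protected lemma add_mul (o p q : Octonion) : (o + p) * q = o * q + p * q := by
  ext <;> simp <;> noncomm_ring

protected lemma mul_add (o p q : Octonion) : o * (p + q) = o * p + o * q := by
  ext <;> simp <;> noncomm_ring

lemma norm_pos {o : Octonion} (ho : o ≠ 0) : 0 < norm o := by
  have : o.1 ≠ 0 ∨ o.2 ≠ 0 := by
    by_contra! h
    exact ho (ext h.1 h.2)
  apply Real.sqrt_pos.mpr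
  rcases this with h | h <;> positivity

lemma im_fst_re (o : Octonion) : (im o).1.re = 0 := by
  simp [im, re]

lemma mul_self_of_fst_re_eq_zero {v : Octonion} (h : v.1.re = 0) :
    v * v = (-(norm v ^ 2)) • 1 := by
  have hstar : star v.1 = -v.1 := by ext <;> simp [h]
  rw [norm, Real.sq_sqrt (by positivity)]
  ext : 1
  · rw [fst_mul, fst_smul, fst_one, ← neg_neg (v.1 * v.1), ← mul_neg, ← hstar,
      Quaternion.self_mul_star, Quaternion.star_mul_self]
    ext <;> simp [Quaternion.normSq_eq_norm_mul_self, sq]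
    ring
  · simp [hstar]

/-- For `u * u = -1` this is the embedding `ℂ ≅ ℝ[u] ⊆ 𝕆` sending `i` to `u`. -/
def complexLine (u : Octonion) : ℂ →L[ℝ] Octonion :=
  LinearMap.toContinuousLinearMap
    { toFun := fun z => z.re • (1 : Octonion) + z.im • u
      map_add' := fun z w => by
        simp only [Complex.add_re, Complex.add_im, add_smul]
        abel
      map_smul' := fun x z => by
        simp only [Complex.smul_re, Complex.smul_im, RingHom.id_apply, smul_add, mul_smul,
          smul_eq_mul] }

lemma complexLine_apply (u : Octonion) (z : ℂ) :
    complexLine u z = z.re • (1 : Octonion) + z.im • u := rfl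

variable {u : Octonion}

lemma complexLine_mul (hu : u * u = -1) (z w : ℂ) :
    complexLine u z * complexLine u w = complexLine u (z * w) := by
  simp only [complexLine_apply, Octonion.add_mul, Octonion.mul_add, Octonion.smul_mul,
    Octonion.mul_smul, Octonion.one_mul, Octonion.mul_one, hu, Complex.mul_re, Complex.mul_im]
  module

lemma pow_complexLine (hu : u * u = -1) (z : ℂ) (k : ℕ) :
    pow (complexLine u z) k = complexLine u (z ^ k) := by
  induction k with
  | zero => simp [pow, complexLine_apply]
  | succ k ih => rw [pow, ih, complexLine_mul hu, pow_succ', mul_comm]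

lemma exp_complexLine (hu : u * u = -1) (z : ℂ) :
    exp (complexLine u z) = complexLine u (Complex.exp z) := by
  have hsum : Summable fun k : ℕ => ((k.factorial : ℝ)⁻¹) • z ^ k :=
    NormedSpace.expSeries_summable' (𝕂 := ℝ) z
  rw [exp, Complex.exp_eq_exp_ℂ, NormedSpace.exp_eq_tsum (𝕂 := ℝ), (complexLine u).map_tsum hsum]
  simp only [map_smul, pow_complexLine hu]

def unitIm (o : Octonion) : Octonion := (norm (im o))⁻¹ • im o

lemma unitIm_mul_self {o : Octonion} (hv : im o ≠ 0) : unitIm o * unitIm o = -1 := by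
  have hn : norm (im o) ≠ 0 := (norm_pos hv).ne'
  rw [unitIm, Octonion.smul_mul, Octonion.mul_smul, mul_self_of_fst_re_eq_zero (im_fst_re o), smul_smul,
    smul_smul]
  field_simp
  rw [neg_smul, one_smul]

lemma complexLine_unitIm {o : Octonion} (hv : im o ≠ 0) :
    complexLine (unitIm o) ⟨re o, norm (im o)⟩ = o := by
  rw [complexLine_apply, unitIm, smul_smul, mul_inv_cancel₀ (norm_pos hv).ne', one_smul, im]
  abel

end Octonion

/-- For an octonion with nonzero imaginary part `v`,
`exp o = exp(Re o) (cos |v| + (v/|v|) sin |v|)`. -/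
theorem octonion_exp_eq (o : Octonion) (hv : Octonion.im o ≠ 0) :
    Octonion.exp o =
      Real.exp (Octonion.re o) •
        (Real.cos (Octonion.norm (Octonion.im o)) • (1 : Octonion) +
          Real.sin (Octonion.norm (Octonion.im o)) •
            ((Octonion.norm (Octonion.im o))⁻¹ • Octonion.im o)) := by
  conv_lhs => rw [← Octonion.complexLine_unitIm hv]
  rw [Octonion.exp_complexLine (Octonion.unitIm_mul_self hv), Octonion.complexLine_apply,
    Complex.exp_re, Complex.exp_im, Octonion.unitIm]
  module
end
end
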